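/- arXiv:1008.1292 — 4 statements merged into one kernel-verified Lean document; each statement's English description precedes it below -/
import Mathlib

section
/- If {K_j}_{j=1..m} are d×d complex matrices with ∑_j K_j† K_j ≤ I and ∑_j |det K_j|^(2/d) = 1, then every K_j is a scalar multiple of a unitary matrix (i.e., K_j† K_j = c_j I with c_j ≥ 0), and ∑_j c_j = 1. -/
/-!
Write `A j = K jᴴ * K j`, a positive semidefinite matrix with `|det K j|^2 = det A j`.
AM-GM on the eigenvalues of `A j` gives `|det K j|^(2/d) ≤ tr (A j) / d`, and summing over `j`,
`∑ j, tr (A j) / d ≤ tr 1 / d = 1` since `1 - ∑ j, A j ≥ 0`. Equality in the total forces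
equality in each AM-GM, so all eigenvalues of `A j` coincide and `A j` is a scalar.
-/

open Matrix ComplexOrder

lemma Fintype.sum_inv_card_eq_one (n : Type*) [Fintype n] [Nonempty n] :
    ∑ _i : n, (Fintype.card n : ℝ)⁻¹ = 1 := by
  simp [Finset.card_univ]

namespace Matrix

variable {n 𝕜 : Type*} [Fintype n] [DecidableEq n] [RCLike 𝕜] {A : Matrix n n 𝕜}

lemma IsHermitian.eq_smul_one_of_eigenvalues_eq (hA : A.IsHermitian) {c : ℝ}
    (h : ∀ i, hA.eigenvalues i = c) : A = (c : 𝕜) • 1 := by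
  have hdiag : diagonal (RCLike.ofReal ∘ hA.eigenvalues) = algebraMap 𝕜 (Matrix n n 𝕜) c := by
    ext i k
    simp [h, diagonal_apply, algebraMap_matrix_apply]
  rw [hA.spectral_theorem, hdiag, AlgHomClass.commutes, Algebra.algebraMap_eq_smul_one]

lemma IsHermitian.re_trace_div_card_eq_sum (hA : A.IsHermitian) :
    RCLike.re A.trace / Fintype.card n = ∑ i, (Fintype.card n : ℝ)⁻¹ * hA.eigenvalues i := by
  rw [hA.trace_eq_sum_eigenvalues, ← RCLike.ofReal_sum, RCLike.ofReal_re, ← Finset.mul_sum,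
    div_eq_inv_mul]

lemma PosSemidef.re_det_rpow_eq_prod (hA : A.PosSemidef) (p : ℝ) :
    RCLike.re A.det ^ p = ∏ i, hA.1.eigenvalues i ^ p := by
  rw [hA.1.det_eq_prod_eigenvalues, ← RCLike.ofReal_prod, RCLike.ofReal_re,
    Real.finsetProd_rpow _ _ fun i _ => hA.eigenvalues_nonneg i]

lemma PosSemidef.re_det_rpow_le_re_trace_div [Nonempty n] (hA : A.PosSemidef) :
    RCLike.re A.det ^ (Fintype.card n : ℝ)⁻¹ ≤ RCLike.re A.trace / Fintype.card n := by
  rw [hA.re_det_rpow_eq_prod, hA.1.re_trace_div_card_eq_sum]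
  exact Real.geom_mean_le_arith_mean_weighted _ _ _ (fun _ _ => by positivity)
    (Fintype.sum_inv_card_eq_one n) fun i _ => hA.eigenvalues_nonneg i

lemma PosSemidef.eq_smul_one_of_re_det_rpow_eq [Nonempty n] (hA : A.PosSemidef)
    (h : RCLike.re A.det ^ (Fintype.card n : ℝ)⁻¹ = RCLike.re A.trace / Fintype.card n) :
    A = ((RCLike.re A.trace / Fintype.card n : ℝ) : 𝕜) • 1 := by
  rw [hA.re_det_rpow_eq_prod, hA.1.re_trace_div_card_eq_sum] at h
  have hconst := (Real.geom_mean_eq_arith_mean_weighted_iff_of_pos' _ _ _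
    (fun _ _ => by positivity) (Fintype.sum_inv_card_eq_one n)
    fun i _ => hA.eigenvalues_nonneg i).mp h
  rw [hA.1.re_trace_div_card_eq_sum]
  exact hA.1.eq_smul_one_of_eigenvalues_eq fun i => hconst i (Finset.mem_univ i)

lemma sum_re_trace_le_card_of_posSemidef_one_sub {ι : Type*} [Fintype ι] {A : ι → Matrix n n 𝕜}
    (h : (1 - ∑ j, A j).PosSemidef) : ∑ j, RCLike.re (A j).trace ≤ Fintype.card n := by
  have := (RCLike.nonneg_iff.mp h.trace_nonneg).1
  rwa [trace_sub, trace_one, trace_sum, map_sub, map_sum, RCLike.natCast_re, sub_nonneg] at this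

lemma norm_det_rpow_two_div_eq (K : Matrix n n 𝕜) (p : ℝ) :
    ‖K.det‖ ^ (2 / p) = RCLike.re (Kᴴ * K).det ^ p⁻¹ := by
  rw [det_mul, det_conjTranspose, RCLike.star_def, RCLike.conj_mul, ← RCLike.ofReal_pow,
    RCLike.ofReal_re, div_eq_mul_inv, ← Real.rpow_natCast_mul (norm_nonneg _), Nat.cast_ofNat]

lemma norm_det_rpow_le_re_trace_conjTranspose_mul_self_div [Nonempty n] (K : Matrix n n 𝕜) :
    ‖K.det‖ ^ ((2 : ℝ) / Fintype.card n) ≤ RCLike.re (Kᴴ * K).trace / Fintype.card n := by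
  rw [norm_det_rpow_two_div_eq]
  exact (posSemidef_conjTranspose_mul_self K).re_det_rpow_le_re_trace_div

lemma conjTranspose_mul_self_eq_smul_one_of_norm_det_rpow_eq [Nonempty n] (K : Matrix n n 𝕜)
    (h : ‖K.det‖ ^ ((2 : ℝ) / Fintype.card n) = RCLike.re (Kᴴ * K).trace / Fintype.card n) :
    Kᴴ * K = ((‖K.det‖ ^ ((2 : ℝ) / Fintype.card n) : ℝ) : 𝕜) • 1 := by
  rw [norm_det_rpow_two_div_eq] at h
  rw [norm_det_rpow_two_div_eq, h]
  exact (posSemidef_conjTranspose_mul_self K).eq_smul_one_of_re_det_rpow_eq h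

end Matrix

/-- Equality case: if `∑ j, K jᴴ * K j ≤ I` and `∑ j |det (K j)|^(2/d) = 1`, then each
`K j` is a nonnegative scalar multiple of a unitary (`K jᴴ * K j = c j • I`, `c j ≥ 0`)
and `∑ j, c j = 1`. -/
theorem sum_abs_det_rpow_eq_one {d m : ℕ} (hd : 1 ≤ d)
    (K : Fin m → Matrix (Fin d) (Fin d) ℂ)
    (hK : ((1 : Matrix (Fin d) (Fin d) ℂ) - ∑ j, (K j)ᴴ * K j).PosSemidef)
    (heq : ∑ j, ‖(K j).det‖ ^ ((2 : ℝ) / d) = 1) :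
    ∃ c : Fin m → ℝ, (∀ j, 0 ≤ c j ∧
      (K j)ᴴ * K j = ((c j : ℂ)) • (1 : Matrix (Fin d) (Fin d) ℂ)) ∧ ∑ j, c j = 1 := by
  have : Nonempty (Fin d) := ⟨⟨0, hd⟩⟩
  set t : Fin m → ℝ := fun j => RCLike.re ((K j)ᴴ * K j).trace / d
  have hle : ∀ j, ‖(K j).det‖ ^ ((2 : ℝ) / d) ≤ t j := fun j => by
    simpa only [Fintype.card_fin] using norm_det_rpow_le_re_trace_conjTranspose_mul_self_div (K j)
  have ht : ∑ j, t j ≤ 1 := by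
    rw [← Finset.sum_div, div_le_one (by positivity)]
    simpa using sum_re_trace_le_card_of_posSemidef_one_sub hK
  have hsum : ∑ j, ‖(K j).det‖ ^ ((2 : ℝ) / d) = ∑ j, t j :=
    heq.trans (ht.antisymm (heq ▸ Finset.sum_le_sum fun j _ => hle j)).symm
  have hcase := (Finset.sum_eq_sum_iff_of_le fun j _ => hle j).mp hsum
  refine ⟨fun j => ‖(K j).det‖ ^ ((2 : ℝ) / d), fun j => ⟨by positivity, ?_⟩, heq⟩
  have hscalar := conjTranspose_mul_self_eq_smul_one_of_norm_det_rpow_eq (K j)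
    (by simpa only [Fintype.card_fin] using hcase j (Finset.mem_univ j))
  rwa [Fintype.card_fin] at hscalar
end

section
/- Let E be a function from vectors in ℂ^{d₁} ⊗ H (H a finite-dimensional Hilbert space) to nonnegative reals that is invariant under g ⊗ I for all g ∈ SL(d₁, ℂ) and homogeneous of degree 2 (E(c·v) = |c|²·E(v) for c ∈ ℂ). If v ∈ ℂ^{d₁} ⊗ H lies in V ⊗ H for some proper subspace V ⊊ ℂ^{d₁}, then E(v) = 0. -/
open Matrix TensorProduct

/-! There is a determinant-one matrix `g` that acts on the proper subspace `V` as multiplication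
by `2` (compensating on a complementary line), so `g ⊗ I` doubles `v`. Invariance and
homogeneity then give `E v = 4 E v`. -/

theorem Submodule.exists_dotProduct_eq_one_of_ne_top {K ι : Type*} [Field K] [Fintype ι]
    [DecidableEq ι] {V : Submodule K (ι → K)} (hV : V ≠ ⊤) :
    ∃ c u : ι → K, c ⬝ᵥ u = 1 ∧ ∀ y ∈ V, c ⬝ᵥ y = 0 := by
  obtain ⟨f, hf0, hVf⟩ := V.exists_le_ker_of_lt_top hV.lt_top
  obtain ⟨x, hx⟩ : ∃ x, f x ≠ 0 := by
    by_contra! h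
    exact hf0 (LinearMap.ext h)
  refine ⟨(dotProductEquiv K ι).symm f, (f x)⁻¹ • x, ?_, fun y hy => ?_⟩ <;>
    rw [← dotProductEquiv_apply_apply, LinearEquiv.apply_symm_apply]
  · rw [map_smul, smul_eq_mul, inv_mul_cancel₀ hx]
  · exact hVf hy

theorem Matrix.exists_det_eq_one_mulVec_eq_smul {K ι : Type*} [Field K] [Fintype ι]
    [DecidableEq ι] {V : Submodule K (ι → K)} (hV : V ≠ ⊤) {a : K} (ha : a ≠ 0) :
    ∃ g : Matrix ι ι K, g.det = 1 ∧ ∀ y ∈ V, g *ᵥ y = a • y := by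
  obtain ⟨c, u, hcu, hcV⟩ := V.exists_dotProduct_eq_one_of_ne_top hV
  -- `g` is `a` on the hyperplane `c = 0` and `a ^ (1 - card ι)` on `u`
  refine ⟨a • (1 + vecMulVec (((a ^ Fintype.card ι)⁻¹ - 1) • u) c), ?_, fun y hy => ?_⟩
  · rw [det_smul, vecMulVec_eq Unit, det_one_add_replicateCol_mul_replicateRow, dotProduct_smul,
      hcu, smul_eq_mul, mul_one, add_sub_cancel, mul_inv_cancel₀ (pow_ne_zero _ ha)]
  · rw [smul_mulVec, add_mulVec, one_mulVec, vecMulVec_mulVec, hcV y hy]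
    simp

theorem TensorProduct.map_eq_smul_of_mem_range_map_subtype {R M N : Type*} [CommSemiring R]
    [AddCommMonoid M] [Module R M] [AddCommMonoid N] [Module R N] {V : Submodule R M}
    {f : M →ₗ[R] M} {a : R} (hf : ∀ y ∈ V, f y = a • y) {x : M ⊗[R] N}
    (hx : x ∈ LinearMap.range (map V.subtype (LinearMap.id : N →ₗ[R] N))) :
    map f LinearMap.id x = a • x := by
  obtain ⟨w, rfl⟩ := hx
  have hfV : f ∘ₗ V.subtype = a • V.subtype := LinearMap.ext fun y => hf y y.2
  rw [← LinearMap.comp_apply, ← map_comp, hfV, LinearMap.id_comp, map_smul_left,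
    LinearMap.smul_apply]

theorem E_eq_zero_of_mem_proper_subspace_tensor_general {d₁ : ℕ}
    {H : Type*} [NormedAddCommGroup H] [InnerProductSpace ℂ H]
    (E : TensorProduct ℂ (Fin d₁ → ℂ) H → ℝ)
    (hinv : ∀ (g : Matrix (Fin d₁) (Fin d₁) ℂ), g.det = 1 →
      ∀ v, E (TensorProduct.map (Matrix.toLin' g) (LinearMap.id : H →ₗ[ℂ] H) v) = E v)
    (hhom : ∀ (c : ℂ) (v), E (c • v) = ‖c‖ ^ 2 * E v)
    (V : Submodule ℂ (Fin d₁ → ℂ)) (hV : V ≠ ⊤)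
    (v : TensorProduct ℂ (Fin d₁ → ℂ) H)
    (hv : v ∈ LinearMap.range
      (TensorProduct.map V.subtype (LinearMap.id : H →ₗ[ℂ] H))) :
    E v = 0 := by
  obtain ⟨g, hdet, hgV⟩ := exists_det_eq_one_mulVec_eq_smul hV (two_ne_zero (α := ℂ))
  have hgv : map (toLin' g) LinearMap.id v = (2 : ℂ) • v :=
    map_eq_smul_of_mem_range_map_subtype (fun y hy => hgV y hy) hv
  have h := hinv g hdet v
  rw [hgv, hhom, Complex.norm_two] at h
  linarith

/-- If `E` on `ℂ^{d₁} ⊗ H` is `SL(d₁,ℂ) ⊗ I`-invariant and homogeneous of degree 2,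
then `E` vanishes on any vector lying in `V ⊗ H` for a proper subspace `V ⊊ ℂ^{d₁}`. -/
theorem E_eq_zero_of_mem_proper_subspace_tensor {d₁ : ℕ}
    {H : Type*} [NormedAddCommGroup H] [InnerProductSpace ℂ H] [FiniteDimensional ℂ H]
    (E : TensorProduct ℂ (Fin d₁ → ℂ) H → ℝ) (hEnn : ∀ v, 0 ≤ E v)
    (hinv : ∀ (g : Matrix (Fin d₁) (Fin d₁) ℂ), g.det = 1 →
      ∀ v, E (TensorProduct.map (Matrix.toLin' g) (LinearMap.id : H →ₗ[ℂ] H) v) = E v)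
    (hhom : ∀ (c : ℂ) (v), E (c • v) = ‖c‖ ^ 2 * E v)
    (V : Submodule ℂ (Fin d₁ → ℂ)) (hV : V ≠ ⊤)
    (v : TensorProduct ℂ (Fin d₁ → ℂ) H)
    (hv : v ∈ LinearMap.range
      (TensorProduct.map V.subtype (LinearMap.id : H →ₗ[ℂ] H))) :
    E v = 0 :=
  E_eq_zero_of_mem_proper_subspace_tensor_general E hinv hhom V hV v hv
end

section
/- Let E be a convex nonnegative function on density matrices on ℂ^d ⊗ H that on pure states satisfies E(|ψ⟩⟨ψ|) invariant under (g⊗I) for g ∈ SL(d,ℂ) (up to normalization) and is homogeneous of degree 1 on unnormalized positive rank-one matrices. Suppose a channel $ has Kraus operators {K_j} on ℂ^d with ∑_j K_j†K_j = I, all with nonzero determinant. Then for any pure state ψ, E(($ ⊗ I)(|ψ⟩⟨ψ|)) ≤ (∑_j |det K_j|^(2/d)) · E(|ψ⟩⟨ψ|). -/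
/-!
Each Kraus term `(K_j ⊗ I)|ψ⟩⟨ψ|(K_j ⊗ I)†` is the rank-one matrix of `ṽ_j = (K_j ⊗ I)ψ`, and
`∑ ‖ṽ_j‖² = 1` because the channel is trace preserving. Normalising the `ṽ_j` writes the output as a
convex combination of pure states, so convexity and homogeneity give
`E(∑ |ṽ_j⟩⟨ṽ_j|) ≤ ∑ E(|ṽ_j⟩⟨ṽ_j|)`. Finally `K_j = c_j g_j` with `det g_j = 1` and `c_j` a `d`-th
root of `det K_j`, so homogeneity and `SL(d) ⊗ I`-invariance give
`E(|ṽ_j⟩⟨ṽ_j|) = |c_j|² E(|ψ⟩⟨ψ|) = |det K_j|^(2/d) E(|ψ⟩⟨ψ|)`.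
-/

open Matrix Kronecker ComplexOrder

section
variable {n : Type*} [Fintype n]

def ConvexOnDensityMatrices (E : Matrix n n ℂ → ℝ) : Prop :=
  ∀ (r : ℕ) (p : Fin r → ℝ) (σ : Fin r → Matrix n n ℂ),
    (∀ i, 0 ≤ p i) → ∑ i, p i = 1 → (∀ i, (σ i).PosSemidef ∧ (σ i).trace = 1) →
    E (∑ i, p i • σ i) ≤ ∑ i, p i * E (σ i)

def HomogeneousOnRankOne (E : Matrix n n ℂ → ℝ) : Prop :=
  ∀ (r : ℝ), 0 ≤ r → ∀ ψ : n → ℂ,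
    E (r • vecMulVec ψ (star ψ)) = r * E (vecMulVec ψ (star ψ))

theorem Matrix.mul_vecMulVec_star_mul_conjTranspose {m : Type*} (M : Matrix m n ℂ) (x : n → ℂ) :
    M * vecMulVec x (star x) * Mᴴ = vecMulVec (M *ᵥ x) (star (M *ᵥ x)) := by
  rw [mul_vecMulVec, vecMulVec_mul, star_mulVec]

theorem Matrix.sum_star_mulVec_dotProduct_mulVec {m ι : Type*} [Fintype m] [Fintype ι]
    [DecidableEq n] {N : ι → Matrix m n ℂ} (hN : ∑ j, (N j)ᴴ * N j = 1) (ψ : n → ℂ) :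
    ∑ j, star (N j *ᵥ ψ) ⬝ᵥ (N j *ᵥ ψ) = star ψ ⬝ᵥ ψ := by
  have (j : ι) : star (N j *ᵥ ψ) ⬝ᵥ (N j *ᵥ ψ) = star ψ ⬝ᵥ ((N j)ᴴ * N j) *ᵥ ψ := by
    rw [star_mulVec, dotProduct_mulVec, dotProduct_mulVec, vecMul_vecMul]
  simp_rw [this, ← dotProduct_sum, ← sum_mulVec, hN, one_mulVec]

theorem ConvexOnDensityMatrices.apply_sum_vecMulVec_le {E : Matrix n n ℂ → ℝ}
    (hconv : ConvexOnDensityMatrices E) (hhom : HomogeneousOnRankOne E) {s : ℕ}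
    (v : Fin s → n → ℂ) (hv : ∀ j, v j ≠ 0) (hnorm : ∑ j, star (v j) ⬝ᵥ v j = 1) :
    E (∑ j, vecMulVec (v j) (star (v j))) ≤ ∑ j, E (vecMulVec (v j) (star (v j))) := by
  set p : Fin s → ℝ := fun j => (star (v j) ⬝ᵥ v j).re
  have hp (j : Fin s) : (p j : ℂ) = star (v j) ⬝ᵥ v j :=
    (Complex.eq_re_of_ofReal_le (dotProduct_star_self_nonneg _)).symm
  have hp_pos (j : Fin s) : 0 < p j := by
    exact_mod_cast (hp j).symm ▸ dotProduct_star_self_pos_iff.mpr (hv j)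
  set σ : Fin s → Matrix n n ℂ := fun j => (p j)⁻¹ • vecMulVec (v j) (star (v j))
  have hpσ (j : Fin s) : p j • σ j = vecMulVec (v j) (star (v j)) :=
    smul_inv_smul₀ (hp_pos j).ne' _
  have hσ (j : Fin s) : (σ j).PosSemidef ∧ (σ j).trace = 1 := by
    refine ⟨(posSemidef_vecMulVec_self_star _).smul (inv_nonneg.mpr (hp_pos j).le), ?_⟩
    rw [trace_smul, trace_vecMulVec, dotProduct_comm, ← hp, Complex.real_smul,
      ← Complex.ofReal_mul, inv_mul_cancel₀ (hp_pos j).ne', Complex.ofReal_one]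
  have hp_sum : ∑ j, p j = 1 := by
    exact_mod_cast (by push_cast [hp]; exact hnorm : ((∑ j, p j : ℝ) : ℂ) = 1)
  calc E (∑ j, vecMulVec (v j) (star (v j))) = E (∑ j, p j • σ j) := by simp only [hpσ]
    _ ≤ ∑ j, p j * E (σ j) := hconv s p σ (fun j => (hp_pos j).le) hp_sum hσ
    _ = ∑ j, E (vecMulVec (v j) (star (v j))) := by
      refine Finset.sum_congr rfl fun j _ => ?_
      rw [hhom _ (inv_nonneg.mpr (hp_pos j).le), mul_inv_cancel_left₀ (hp_pos j).ne']

end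

theorem Matrix.exists_det_eq_one_smul {n : Type*} [Fintype n] [DecidableEq n]
    (hn : Fintype.card n ≠ 0) {K : Matrix n n ℂ} (hK : K.det ≠ 0) :
    ∃ (c : ℂ) (g : Matrix n n ℂ), g.det = 1 ∧ K = c • g ∧
      Complex.normSq c = ‖K.det‖ ^ ((2 : ℝ) / Fintype.card n) := by
  set c : ℂ := K.det ^ ((Fintype.card n : ℂ)⁻¹)
  have hc : c ^ Fintype.card n = K.det := Complex.cpow_nat_inv_pow _ hn
  have hc0 : c ≠ 0 := by
    rintro h
    exact hK (by rw [← hc, h, zero_pow hn])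
  refine ⟨c, c⁻¹ • K, ?_, by rw [smul_inv_smul₀ hc0], ?_⟩
  · rw [det_smul, inv_pow, hc, inv_mul_cancel₀ hK]
  · rw [← hc, norm_pow, ← Real.rpow_natCast, ← Real.rpow_mul (norm_nonneg c),
      mul_div_cancel₀ _ (by exact_mod_cast hn), Real.rpow_two, Complex.normSq_eq_norm_sq]

theorem Matrix.sum_kronecker {R ι l m n p : Type*} [NonUnitalNonAssocSemiring R] (s : Finset ι)
    (A : ι → Matrix l m R) (B : Matrix n p R) : (∑ j ∈ s, A j) ⊗ₖ B = ∑ j ∈ s, A j ⊗ₖ B := by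
  ext
  simp [sum_apply, Finset.sum_mul]

section
variable {ι κ : Type*} [Fintype ι] [DecidableEq ι] [Fintype κ] [DecidableEq κ]

def LocallySLInvariant (E : Matrix (ι × κ) (ι × κ) ℂ → ℝ) : Prop :=
  ∀ g : Matrix ι ι ℂ, g.det = 1 → ∀ ψ : ι × κ → ℂ,
    E ((g ⊗ₖ (1 : Matrix κ κ ℂ)) * vecMulVec ψ (star ψ) * (g ⊗ₖ (1 : Matrix κ κ ℂ))ᴴ) =
      E (vecMulVec ψ (star ψ))

theorem LocallySLInvariant.apply_vecMulVec_kronecker_one_mulVec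
    {E : Matrix (ι × κ) (ι × κ) ℂ → ℝ} (hinv : LocallySLInvariant E)
    (hhom : HomogeneousOnRankOne E) (hι : Fintype.card ι ≠ 0) {K : Matrix ι ι ℂ}
    (hK : K.det ≠ 0) (ψ : ι × κ → ℂ) :
    E (vecMulVec ((K ⊗ₖ (1 : Matrix κ κ ℂ)) *ᵥ ψ) (star ((K ⊗ₖ (1 : Matrix κ κ ℂ)) *ᵥ ψ))) =
      ‖K.det‖ ^ ((2 : ℝ) / Fintype.card ι) * E (vecMulVec ψ (star ψ)) := by
  obtain ⟨c, g, hg, rfl, hc⟩ := exists_det_eq_one_smul hι hK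
  set w := (g ⊗ₖ (1 : Matrix κ κ ℂ)) *ᵥ ψ
  have hvw : ((c • g) ⊗ₖ (1 : Matrix κ κ ℂ)) *ᵥ ψ = c • w := by
    rw [smul_kronecker, smul_mulVec]
  have hscale : vecMulVec (c • w) (star (c • w)) = Complex.normSq c • vecMulVec w (star w) := by
    rw [star_smul, smul_vecMulVec, vecMulVec_smul, smul_smul, Complex.star_def,
      Complex.mul_conj, Complex.coe_smul]
  rw [hvw, hscale, hhom _ (Complex.normSq_nonneg c), ← mul_vecMulVec_star_mul_conjTranspose,
    hinv g hg, hc]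

theorem Matrix.sum_conjTranspose_mul_self_kronecker_one {s : Type*} [Fintype s]
    {K : s → Matrix ι ι ℂ} (hK : ∑ j, (K j)ᴴ * K j = 1) :
    ∑ j, (K j ⊗ₖ (1 : Matrix κ κ ℂ))ᴴ * (K j ⊗ₖ (1 : Matrix κ κ ℂ)) = 1 := by
  simp_rw [conjTranspose_kronecker, conjTranspose_one, ← mul_kronecker_mul, one_mul]
  rw [← Matrix.sum_kronecker, hK, one_kronecker_one]

end

theorem channel_factorization_bound_general {d m s : ℕ} (hd : 1 ≤ d)
    (E : Matrix (Fin d × Fin m) (Fin d × Fin m) ℂ → ℝ)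
    (hconv : ∀ (r : ℕ) (p : Fin r → ℝ) (σ : Fin r → Matrix (Fin d × Fin m) (Fin d × Fin m) ℂ),
      (∀ i, 0 ≤ p i) → ∑ i, p i = 1 →
      (∀ i, (σ i).PosSemidef ∧ (σ i).trace = 1) →
      E (∑ i, p i • σ i) ≤ ∑ i, p i * E (σ i))
    (hhom : ∀ (r : ℝ), 0 ≤ r → ∀ ψ : Fin d × Fin m → ℂ,
      E (r • Matrix.vecMulVec ψ (star ψ)) = r * E (Matrix.vecMulVec ψ (star ψ)))
    (hinv : ∀ g : Matrix (Fin d) (Fin d) ℂ, g.det = 1 → ∀ ψ : Fin d × Fin m → ℂ,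
      E ((g ⊗ₖ (1 : Matrix (Fin m) (Fin m) ℂ)) * Matrix.vecMulVec ψ (star ψ) *
          (g ⊗ₖ (1 : Matrix (Fin m) (Fin m) ℂ))ᴴ)
        = E (Matrix.vecMulVec ψ (star ψ)))
    (K : Fin s → Matrix (Fin d) (Fin d) ℂ)
    (hKsum : ∑ j, (K j)ᴴ * K j = 1)
    (hKdet : ∀ j, (K j).det ≠ 0)
    (ψ : Fin d × Fin m → ℂ) (hψ : star ψ ⬝ᵥ ψ = 1) :
    E (∑ j, (K j ⊗ₖ (1 : Matrix (Fin m) (Fin m) ℂ)) * Matrix.vecMulVec ψ (star ψ) *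
        (K j ⊗ₖ (1 : Matrix (Fin m) (Fin m) ℂ))ᴴ)
      ≤ (∑ j, ‖(K j).det‖ ^ ((2 : ℝ) / d)) * E (Matrix.vecMulVec ψ (star ψ)) := by
  have hcard : Fintype.card (Fin d) ≠ 0 := by rw [Fintype.card_fin]; omega
  set N : Fin s → Matrix (Fin d × Fin m) (Fin d × Fin m) ℂ := fun j => K j ⊗ₖ 1
  have hψ0 : ψ ≠ 0 := by
    rintro rfl
    simp at hψ
  have hNψ (j : Fin s) : N j *ᵥ ψ ≠ 0 := fun h =>
    hψ0 (eq_zero_of_mulVec_eq_zero (by simp [N, det_kronecker, hKdet]) h)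
  have hnorm : ∑ j, star (N j *ᵥ ψ) ⬝ᵥ (N j *ᵥ ψ) = 1 := by
    rw [sum_star_mulVec_dotProduct_mulVec
      (sum_conjTranspose_mul_self_kronecker_one hKsum), hψ]
  simp_rw [mul_vecMulVec_star_mul_conjTranspose]
  calc _ ≤ ∑ j, E (vecMulVec (N j *ᵥ ψ) (star (N j *ᵥ ψ))) :=
        ConvexOnDensityMatrices.apply_sum_vecMulVec_le hconv hhom _ hNψ hnorm
    _ = ∑ j, ‖(K j).det‖ ^ ((2 : ℝ) / d) * E (vecMulVec ψ (star ψ)) := by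
        simp_rw [N, LocallySLInvariant.apply_vecMulVec_kronecker_one_mulVec hinv hhom hcard
          (hKdet _), Fintype.card_fin]
    _ = _ := (Finset.sum_mul ..).symm

/-- Factorization bound for a local channel with invertible Kraus operators:
`E(($ ⊗ I)(|ψ⟩⟨ψ|)) ≤ (∑ j |det K j|^(2/d)) · E(|ψ⟩⟨ψ|)` for every pure state `ψ` of
`ℂ^d ⊗ ℂ^m`, where `E` is nonnegative, convex on density matrices, homogeneous of degree 1
on unnormalized positive rank-one matrices, and `SL(d,ℂ) ⊗ I`-invariant on pure states. -/
theorem channel_factorization_bound {d m s : ℕ} (hd : 1 ≤ d)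
    (E : Matrix (Fin d × Fin m) (Fin d × Fin m) ℂ → ℝ)
    (hEnn : ∀ ρ, 0 ≤ E ρ)
    (hconv : ∀ (r : ℕ) (p : Fin r → ℝ) (σ : Fin r → Matrix (Fin d × Fin m) (Fin d × Fin m) ℂ),
      (∀ i, 0 ≤ p i) → ∑ i, p i = 1 →
      (∀ i, (σ i).PosSemidef ∧ (σ i).trace = 1) →
      E (∑ i, p i • σ i) ≤ ∑ i, p i * E (σ i))
    (hhom : ∀ (r : ℝ), 0 ≤ r → ∀ ψ : Fin d × Fin m → ℂ,
      E (r • Matrix.vecMulVec ψ (star ψ)) = r * E (Matrix.vecMulVec ψ (star ψ)))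
    (hinv : ∀ g : Matrix (Fin d) (Fin d) ℂ, g.det = 1 → ∀ ψ : Fin d × Fin m → ℂ,
      E ((g ⊗ₖ (1 : Matrix (Fin m) (Fin m) ℂ)) * Matrix.vecMulVec ψ (star ψ) *
          (g ⊗ₖ (1 : Matrix (Fin m) (Fin m) ℂ))ᴴ)
        = E (Matrix.vecMulVec ψ (star ψ)))
    (K : Fin s → Matrix (Fin d) (Fin d) ℂ)
    (hKsum : ∑ j, (K j)ᴴ * K j = 1)
    (hKdet : ∀ j, (K j).det ≠ 0)
    (ψ : Fin d × Fin m → ℂ) (hψ : star ψ ⬝ᵥ ψ = 1) :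
    E (∑ j, (K j ⊗ₖ (1 : Matrix (Fin m) (Fin m) ℂ)) * Matrix.vecMulVec ψ (star ψ) *
        (K j ⊗ₖ (1 : Matrix (Fin m) (Fin m) ℂ))ᴴ)
      ≤ (∑ j, ‖(K j).det‖ ^ ((2 : ℝ) / d)) * E (Matrix.vecMulVec ψ (star ψ)) :=
  channel_factorization_bound_general hd E hconv hhom hinv K hKsum hKdet ψ hψ
end

section
/- Let ρ be a density matrix written as ρ = ∑_k p_k σ_k, where p_k > 0, ∑_k p_k = 1, and each σ_k is a density matrix. If the von Neumann entropy satisfies S(ρ) = ∑_k p_k S(σ_k), then σ_k = ρ for all k. -/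
/-!
Diagonalise `ρ` by a unitary and let `dₖ` be the diagonal of `σₖ` in that eigenbasis, so that
the spectrum of `ρ` is `λ = ∑ₖ pₖ dₖ`. With `η t = -t log t` and `H x = ∑ᵢ η xᵢ`,
`S(ρ) = H(λ) ≥ ∑ₖ pₖ H(dₖ) ≥ ∑ₖ pₖ S(σₖ)`:
the first step is concavity of `η`; the second holds because the diagonal of a positive matrix
in an orthonormal basis is the image of its spectrum under the doubly stochastic matrix `|Wᵢⱼ|²`,
`W` the change of basis. If `S(ρ) = ∑ₖ pₖ S(σₖ)`, both steps are equalities, and strict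
concavity of `η` then forces `dₖ = λ` in the first and `σₖ` diagonal in the eigenbasis of `ρ`
in the second, so `σₖ = ρ`.
-/

open Matrix ComplexOrder
open scoped Classical

/-- The von Neumann entropy `S(ρ) = -∑ λᵢ log λᵢ` of a Hermitian matrix,
computed from its eigenvalues. -/
noncomputable def vonNeumannEntropy {N : ℕ} (ρ : Matrix (Fin N) (Fin N) ℂ) : ℝ :=
  if h : ρ.IsHermitian then -∑ i, h.eigenvalues i * Real.log (h.eigenvalues i) else 0

open Finset Real Unitary

section Jensen

variable {ι κ : Type*} [Fintype ι] [Fintype κ] {s : Set ℝ} {f : ℝ → ℝ}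

theorem ConcaveOn.sum_sum_mul_le_sum_map_sum {w x : ι → κ → ℝ} (hf : ConcaveOn ℝ s f)
    (hw₀ : ∀ i k, 0 ≤ w i k) (hw₁ : ∀ i, ∑ k, w i k = 1) (hx : ∀ i k, x i k ∈ s) :
    ∑ i, ∑ k, w i k * f (x i k) ≤ ∑ i, f (∑ k, w i k * x i k) :=
  sum_le_sum fun i _ ↦ by
    simpa only [smul_eq_mul] using
      hf.le_map_sum (fun k _ ↦ hw₀ i k) (hw₁ i) (fun k _ ↦ hx i k)

theorem StrictConcaveOn.eq_sum_mul_of_sum_sum_mul_eq {w x : ι → κ → ℝ}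
    (hf : StrictConcaveOn ℝ s f) (hw₀ : ∀ i k, 0 ≤ w i k) (hw₁ : ∀ i, ∑ k, w i k = 1)
    (hx : ∀ i k, x i k ∈ s) (h : ∑ i, ∑ k, w i k * f (x i k) = ∑ i, f (∑ k, w i k * x i k))
    {i : ι} {k : κ} (hik : w i k ≠ 0) : x i k = ∑ l, w i l * x i l := by
  have hrow : ∀ i, ∑ k, w i k * f (x i k) ≤ f (∑ k, w i k * x i k) := fun i ↦ by
    simpa only [smul_eq_mul] using
      hf.concaveOn.le_map_sum (fun k _ ↦ hw₀ i k) (hw₁ i) (fun k _ ↦ hx i k)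
  have hi := (sum_eq_sum_iff_of_le fun i _ ↦ hrow i).1 h i (mem_univ i)
  simpa only [smul_eq_mul] using (hf.map_sum_eq_iff' (fun k _ ↦ hw₀ i k) (hw₁ i)
    (fun k _ ↦ hx i k)).1 (by simpa only [smul_eq_mul] using hi.symm) k (mem_univ k) hik

theorem sum_mul_sum_eq_sum_sum_mul (p : κ → ℝ) (g : κ → ι → ℝ) :
    ∑ k, p k * ∑ i, g k i = ∑ i, ∑ k, p k * g k i := by
  simp only [mul_sum]
  exact sum_comm

theorem ConcaveOn.sum_mul_sum_le_sum_map_sum {p : κ → ℝ} {x : κ → ι → ℝ}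
    (hf : ConcaveOn ℝ s f) (hp₀ : ∀ k, 0 ≤ p k) (hp₁ : ∑ k, p k = 1) (hx : ∀ k i, x k i ∈ s) :
    ∑ k, p k * ∑ i, f (x k i) ≤ ∑ i, f (∑ k, p k * x k i) := by
  rw [sum_mul_sum_eq_sum_sum_mul]
  exact hf.sum_sum_mul_le_sum_map_sum (fun _ k ↦ hp₀ k) (fun _ ↦ hp₁) (fun i k ↦ hx k i)

theorem StrictConcaveOn.eq_sum_mul_of_sum_mul_sum_eq {p : κ → ℝ} {x : κ → ι → ℝ}
    (hf : StrictConcaveOn ℝ s f) (hp : ∀ k, 0 < p k) (hp₁ : ∑ k, p k = 1)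
    (hx : ∀ k i, x k i ∈ s) (h : ∑ k, p k * ∑ i, f (x k i) = ∑ i, f (∑ k, p k * x k i))
    (k : κ) (i : ι) : x k i = ∑ l, p l * x l i := by
  rw [sum_mul_sum_eq_sum_sum_mul] at h
  exact hf.eq_sum_mul_of_sum_sum_mul_eq (w := fun _ k ↦ p k) (x := fun i k ↦ x k i)
    (fun _ k ↦ (hp k).le) (fun _ ↦ hp₁) (fun i k ↦ hx k i) h (hp k).ne'

theorem sum_sum_mul_eq_sum_of_mem_doublyStochastic {R n : Type*} [Fintype n] [DecidableEq n]
    [Semiring R] [PartialOrder R] [IsOrderedRing R] {M : Matrix n n R}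
    (hM : M ∈ doublyStochastic R n) (g : n → R) : ∑ i, ∑ j, M i j * g j = ∑ j, g j := by
  rw [sum_comm]
  simp only [← sum_mul, sum_col_of_mem_doublyStochastic hM, one_mul]

variable {n : Type*} [Fintype n] [DecidableEq n] {M : Matrix n n ℝ} {y : n → ℝ}

theorem ConcaveOn.sum_map_le_sum_map_mulVec (hf : ConcaveOn ℝ s f)
    (hM : M ∈ doublyStochastic ℝ n) (hy : ∀ j, y j ∈ s) :
    ∑ j, f (y j) ≤ ∑ i, f ((M *ᵥ y) i) :=
  calc ∑ j, f (y j) = ∑ i, ∑ j, M i j * f (y j) :=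
        (sum_sum_mul_eq_sum_of_mem_doublyStochastic hM _).symm
    _ ≤ ∑ i, f ((M *ᵥ y) i) :=
        hf.sum_sum_mul_le_sum_map_sum (fun _ _ ↦ nonneg_of_mem_doublyStochastic hM)
          (sum_row_of_mem_doublyStochastic hM) (fun _ j ↦ hy j)

theorem StrictConcaveOn.eq_mulVec_of_sum_map_mulVec_eq (hf : StrictConcaveOn ℝ s f)
    (hM : M ∈ doublyStochastic ℝ n) (hy : ∀ j, y j ∈ s)
    (h : ∑ i, f ((M *ᵥ y) i) = ∑ j, f (y j)) {i j : n} (hij : M i j ≠ 0) :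
    y j = (M *ᵥ y) i := by
  refine hf.eq_sum_mul_of_sum_sum_mul_eq (w := M) (x := fun _ j ↦ y j)
    (fun _ _ ↦ nonneg_of_mem_doublyStochastic hM) (sum_row_of_mem_doublyStochastic hM)
    (fun _ j ↦ hy j) ?_ hij
  rw [sum_sum_mul_eq_sum_of_mem_doublyStochastic hM]
  exact h.symm

end Jensen

section Unitary

variable {n : Type*} [Fintype n] [DecidableEq n]

theorem Matrix.map_normSq_mem_doublyStochastic {U : Matrix n n ℂ} (hU : U ∈ unitaryGroup n ℂ) :
    U.map Complex.normSq ∈ doublyStochastic ℝ n := by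
  refine mem_doublyStochastic_iff_sum.2 ⟨fun i j ↦ Complex.normSq_nonneg _, fun i ↦ ?_, fun j ↦ ?_⟩
  · have h := congr_fun₂ (mem_unitaryGroup_iff.1 hU) i i
    simp only [mul_apply, star_apply, one_apply_eq, RCLike.star_def, Complex.mul_conj] at h
    exact_mod_cast h
  · have h := congr_fun₂ (mem_unitaryGroup_iff'.1 hU) j j
    simp only [mul_apply, star_apply, one_apply_eq, RCLike.star_def,
      ← Complex.normSq_eq_conj_mul_self] at h
    exact_mod_cast h

theorem Matrix.conjStarAlgAut_diagonal_apply_self (U : unitaryGroup n ℂ) (μ : n → ℝ) (i : n) :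
    conjStarAlgAut ℂ _ U (diagonal (RCLike.ofReal ∘ μ)) i i =
      (((U : Matrix n n ℂ).map Complex.normSq *ᵥ μ) i : ℂ) := by
  rw [conjStarAlgAut_apply, mul_apply]
  simp only [mul_diagonal, star_apply, RCLike.star_def, Function.comp_apply, mulVec, dotProduct,
    map_apply, Complex.ofReal_sum, Complex.ofReal_mul, ← Complex.mul_conj]
  exact sum_congr rfl fun j _ ↦ mul_right_comm _ _ _

theorem Matrix.conjStarAlgAut_diagonal_eq_diagonal {R : Type*} [CommRing R] [StarRing R]
    (U : unitaryGroup n R) {μ c : n → R} (h : ∀ i j, (U : Matrix n n R) i j ≠ 0 → μ j = c i) :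
    conjStarAlgAut R _ U (diagonal μ) = diagonal c := by
  have hcomm : (U : Matrix n n R) * diagonal μ = diagonal c * U := by
    ext i j
    rw [mul_diagonal, diagonal_mul]
    by_cases hij : (U : Matrix n n R) i j = 0
    · simp [hij]
    · rw [h i j hij, mul_comm]
  rw [conjStarAlgAut_apply, hcomm, mul_assoc, Unitary.mul_star_self_of_mem U.2, mul_one]

theorem Matrix.posSemidef_conjStarAlgAut {R : Type*} [CommRing R] [PartialOrder R] [StarRing R]
    {A : Matrix n n R} (hA : A.PosSemidef) (U : unitaryGroup n R) :
    (conjStarAlgAut R _ U A).PosSemidef :=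
  hA.mul_mul_conjTranspose_same _

theorem Matrix.re_conjStarAlgAut_sum_smul_apply_self {κ : Type*} [Fintype κ]
    (U : unitaryGroup n ℂ) (p : κ → ℝ) (σ : κ → Matrix n n ℂ) (i : n) :
    (conjStarAlgAut ℂ _ U (∑ k, p k • σ k) i i).re =
      ∑ k, p k * (conjStarAlgAut ℂ _ U (σ k) i i).re := by
  simp only [map_sum, conjStarAlgAut_apply, Algebra.mul_smul_comm, Algebra.smul_mul_assoc,
    Matrix.sum_apply, Matrix.smul_apply, Complex.re_sum, Complex.smul_re, smul_eq_mul]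

end Unitary

section Peierls

variable {n : Type*} [Fintype n] [DecidableEq n] {A : Matrix n n ℂ}

theorem Matrix.IsHermitian.conjStarAlgAut_eq_conjStarAlgAut_diagonal (hA : A.IsHermitian)
    (u : unitaryGroup n ℂ) :
    conjStarAlgAut ℂ _ u A =
      conjStarAlgAut ℂ _ (u * hA.eigenvectorUnitary) (diagonal (RCLike.ofReal ∘ hA.eigenvalues)) := by
  rw [conjStarAlgAut_mul_apply, ← hA.spectral_theorem]

theorem Matrix.IsHermitian.re_conjStarAlgAut_apply_self (hA : A.IsHermitian)
    (u : unitaryGroup n ℂ) (i : n) :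
    (conjStarAlgAut ℂ _ u A i i).re =
      (((u * hA.eigenvectorUnitary : unitaryGroup n ℂ) : Matrix n n ℂ).map Complex.normSq *ᵥ
        hA.eigenvalues) i := by
  rw [hA.conjStarAlgAut_eq_conjStarAlgAut_diagonal, conjStarAlgAut_diagonal_apply_self,
    Complex.ofReal_re]

theorem Matrix.PosSemidef.sum_negMulLog_eigenvalues_le (hA : A.PosSemidef)
    (u : unitaryGroup n ℂ) :
    ∑ j, negMulLog (hA.1.eigenvalues j) ≤ ∑ i, negMulLog (conjStarAlgAut ℂ _ u A i i).re := by
  simp only [hA.1.re_conjStarAlgAut_apply_self u]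
  exact concaveOn_negMulLog.sum_map_le_sum_map_mulVec
    (map_normSq_mem_doublyStochastic (u * hA.1.eigenvectorUnitary).2) hA.eigenvalues_nonneg

theorem Matrix.PosSemidef.conjStarAlgAut_eq_diagonal_of_sum_negMulLog_eq (hA : A.PosSemidef)
    (u : unitaryGroup n ℂ)
    (h : ∑ i, negMulLog (conjStarAlgAut ℂ _ u A i i).re = ∑ j, negMulLog (hA.1.eigenvalues j)) :
    conjStarAlgAut ℂ _ u A = diagonal fun i ↦ ((conjStarAlgAut ℂ _ u A i i).re : ℂ) := by
  simp only [hA.1.re_conjStarAlgAut_apply_self u] at h ⊢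
  rw [hA.1.conjStarAlgAut_eq_conjStarAlgAut_diagonal]
  refine conjStarAlgAut_diagonal_eq_diagonal _ fun i j hij ↦ congrArg _ <|
    strictConcaveOn_negMulLog.eq_mulVec_of_sum_map_mulVec_eq
      (map_normSq_mem_doublyStochastic (u * hA.1.eigenvectorUnitary).2) hA.eigenvalues_nonneg h ?_
  simpa using hij

end Peierls

theorem vonNeumannEntropy_eq_sum_negMulLog {N : ℕ} {ρ : Matrix (Fin N) (Fin N) ℂ}
    (h : ρ.IsHermitian) : vonNeumannEntropy ρ = ∑ i, negMulLog (h.eigenvalues i) := by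
  simp only [vonNeumannEntropy, dif_pos h, negMulLog, neg_mul, sum_neg_distrib]

theorem entropy_eq_avg_implies_all_eq_general {N s : ℕ}
    (ρ : Matrix (Fin N) (Fin N) ℂ) (hρ : ρ.PosSemidef)
    (p : Fin s → ℝ) (σ : Fin s → Matrix (Fin N) (Fin N) ℂ)
    (hp : ∀ k, 0 < p k) (hp1 : ∑ k, p k = 1)
    (hσ : ∀ k, (σ k).PosSemidef ∧ (σ k).trace = 1)
    (hdecomp : ρ = ∑ k, p k • σ k)
    (hS : vonNeumannEntropy ρ = ∑ k, p k * vonNeumannEntropy (σ k)) :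
    ∀ k, σ k = ρ := by
  set C := conjStarAlgAut ℂ _ (star hρ.1.eigenvectorUnitary)
  set μ := hρ.1.eigenvalues
  set d : Fin s → Fin N → ℝ := fun k i ↦ (C (σ k) i i).re
  have hCρ : C ρ = diagonal (RCLike.ofReal ∘ μ) := hρ.1.conjStarAlgAut_star_eigenvectorUnitary
  have hμ : ∀ i, μ i = ∑ k, p k * d k i := fun i ↦ by
    have h : (C ρ i i).re = ∑ k, p k * d k i := by
      rw [hdecomp]
      exact re_conjStarAlgAut_sum_smul_apply_self _ p σ i
    rwa [hCρ, diagonal_apply_eq] at h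
  have hd₀ : ∀ k i, 0 ≤ d k i := fun k _ ↦
    (Complex.nonneg_iff.1 (posSemidef_conjStarAlgAut (hσ k).1 _).diag_nonneg).1
  simp only [vonNeumannEntropy_eq_sum_negMulLog hρ.1,
    vonNeumannEntropy_eq_sum_negMulLog (hσ _).1.1] at hS
  have hpeierls : ∀ k ∈ univ, p k * ∑ j, negMulLog ((hσ k).1.1.eigenvalues j) ≤
      p k * ∑ i, negMulLog (d k i) :=
    fun k _ ↦ mul_le_mul_of_nonneg_left ((hσ k).1.sum_negMulLog_eigenvalues_le _) (hp k).le
  have hmix : ∑ k, p k * ∑ i, negMulLog (d k i) ≤ ∑ i, negMulLog (μ i) := by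
    simpa only [← hμ] using concaveOn_negMulLog.sum_mul_sum_le_sum_map_sum
      (fun k ↦ (hp k).le) hp1 hd₀
  have hpeierls_eq := le_antisymm (sum_le_sum hpeierls) (hS ▸ hmix)
  have hmix_eq := le_antisymm hmix (hS ▸ sum_le_sum hpeierls)
  intro k
  have hdiag : C (σ k) = diagonal fun i ↦ (d k i : ℂ) :=
    (hσ k).1.conjStarAlgAut_eq_diagonal_of_sum_negMulLog_eq _ <| Eq.symm <|
      mul_left_cancel₀ (hp k).ne' ((sum_eq_sum_iff_of_le hpeierls).1 hpeierls_eq k (mem_univ k))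
  have hdμ : ∀ i, d k i = μ i := fun i ↦ by
    rw [hμ]
    exact strictConcaveOn_negMulLog.eq_sum_mul_of_sum_mul_sum_eq hp hp1 hd₀
      (by simpa only [← hμ] using hmix_eq) k i
  refine EquivLike.injective C (hdiag.trans ?_)
  simp only [hdμ]
  exact hCρ.symm

/-- Equality case of strict concavity of von Neumann entropy: if
`ρ = ∑ k, p k • σ k` with `p k > 0`, `∑ p = 1`, the `σ k` density matrices, and
`S(ρ) = ∑ k, p k * S(σ k)`, then `σ k = ρ` for all `k`. -/
theorem entropy_eq_avg_implies_all_eq {N s : ℕ}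
    (ρ : Matrix (Fin N) (Fin N) ℂ) (hρ : ρ.PosSemidef) (hρtr : ρ.trace = 1)
    (p : Fin s → ℝ) (σ : Fin s → Matrix (Fin N) (Fin N) ℂ)
    (hp : ∀ k, 0 < p k) (hp1 : ∑ k, p k = 1)
    (hσ : ∀ k, (σ k).PosSemidef ∧ (σ k).trace = 1)
    (hdecomp : ρ = ∑ k, p k • σ k)
    (hS : vonNeumannEntropy ρ = ∑ k, p k * vonNeumannEntropy (σ k)) :
    ∀ k, σ k = ρ :=
  entropy_eq_avg_implies_all_eq_general ρ hρ p σ hp hp1 hσ hdecomp hS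
end
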